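/- arXiv:math/0703875 — 3 statements merged into one kernel-verified Lean document; each statement's English description precedes it below -/
import Mathlib

section
/- For each $\delta>0$ there exists $\rho=\rho(\delta)\in(0,\infty)$ such that for all $n\geq 1$, $\mathbf{P}\{\#K_\delta\geq n\}\leq \mathbf{P}\{1+\mathrm{Poisson}(\rho)\geq n\}$, i.e. the number of blocks of the Kingman coalescent at any fixed positive time, started from infinitely many blocks, is stochastically dominated by one plus a Poisson random variable. -/
/-!
With `T_m = ∑_{k ≥ m} Υ_k`, the event `#K_δ ≥ m + 1` is `T_m > δ`, and it suffices to bound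
`P(δ ≤ ∑_{i ∈ s} Υ_i)` uniformly over finite sets `s` of indices `≥ m`. Two bounds do this.

Chernoff at `θ = m(m+1)/4`, with `∑_{k ≥ m} 2/(k(k+1)) = 2/m`, gives `exp((m+1)(1 - mδ/4))`,
a Gaussian tail in `m`, which lies below the Poisson point mass `e^{-ρ} ρ^m / m!` once `m²δ > 8ρ`.

For smaller `m` we use a bound `1 - c` with `c > 0` independent of `m`: for `M ≈ 16/δ`, the
holding times below `M` are all at most `δ/(2M)` with positive probability, and independently of
them the holding times from `M` on sum to less than `δ/2` with probability at least `1/2` (Chernoff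
again). On the Poisson side `P(Poisson(ρ) < m) ≤ 2^m e^{-ρ/2}`, which is at most `c` when
`m ≤ √(8ρ/δ)` and `ρ` is large.
-/

open MeasureTheory ProbabilityTheory Real Finset
open scoped NNReal ENNReal Nat

section ExpMeasure

variable {r t : ℝ}

lemma exponentialPDF_mul_ofReal_exp (ht : t < r) (x : ℝ) :
    exponentialPDF r x * ENNReal.ofReal (exp (t * x)) =
      ENNReal.ofReal (r / (r - t)) * exponentialPDF (r - t) x := by
  rcases lt_or_ge x 0 with hx | hx
  · simp [exponentialPDF_of_neg hx]
  · have hrt : 0 < r - t := sub_pos.2 ht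
    rw [exponentialPDF_of_nonneg hx, exponentialPDF_of_nonneg hx, ← ENNReal.ofReal_mul',
      ← ENNReal.ofReal_mul' (by positivity)]
    · congr 1
      rw [mul_assoc, ← exp_add]
      field_simp
      ring_nf
    · positivity

lemma lintegral_exp_mul_expMeasure (ht : t < r) :
    ∫⁻ x, ENNReal.ofReal (exp (t * x)) ∂expMeasure r = ENNReal.ofReal (r / (r - t)) := by
  have hpdf : ∀ s, Measurable (exponentialPDF s) :=
    fun s => (measurable_exponentialPDFReal s).ennreal_ofReal
  change ∫⁻ x, _ ∂volume.withDensity (exponentialPDF r) = _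
  rw [lintegral_withDensity_eq_lintegral_mul _ (hpdf r) (by fun_prop)]
  simp_rw [Pi.mul_apply, exponentialPDF_mul_ofReal_exp ht]
  rw [lintegral_const_mul _ (hpdf _), lintegral_exponentialPDF_eq_one (sub_pos.2 ht), mul_one]

lemma integrable_exp_mul_expMeasure (ht : t < r) :
    Integrable (fun x => exp (t * x)) (expMeasure r) := by
  refine ⟨by fun_prop, ?_⟩
  rw [hasFiniteIntegral_iff_ofReal (.of_forall fun x => (exp_pos _).le),
    lintegral_exp_mul_expMeasure ht]
  exact ENNReal.ofReal_lt_top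

lemma mgf_id_expMeasure (hr : 0 ≤ r) (ht : t < r) : mgf id (expMeasure r) t = r / (r - t) := by
  rw [mgf, integral_eq_lintegral_of_nonneg_ae (.of_forall fun x => (exp_pos _).le)
    (by fun_prop)]
  simp only [id]
  rw [lintegral_exp_mul_expMeasure ht, ENNReal.toReal_ofReal (div_nonneg hr (sub_pos.2 ht).le)]

lemma expMeasure_Iic_pos (hr : 0 < r) {x : ℝ} (hx : 0 < x) : 0 < expMeasure r (Set.Iic x) := by
  have := isProbabilityMeasure_expMeasure hr
  rw [← ofReal_measureReal, ← cdf_eq_real, cdf_expMeasure_eq hr, if_pos hx.le]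
  simpa using mul_pos hr hx

lemma inv_one_sub_le_exp_two_mul {x : ℝ} (hx₀ : 0 ≤ x) (hx : x ≤ 1 / 2) :
    (1 - x)⁻¹ ≤ exp (2 * x) := by
  rw [inv_le_iff_one_le_mul₀ (by linarith)]
  nlinarith [add_one_le_exp (2 * x)]

variable {Ω : Type*} [MeasurableSpace Ω] {μ : Measure Ω} {X : Ω → ℝ}

lemma integrable_exp_mul_of_map_eq_expMeasure (hX : Measurable X)
    (hlaw : μ.map X = expMeasure r) (ht : t < r) : Integrable (fun ω => exp (t * X ω)) μ := by
  have h := integrable_exp_mul_expMeasure ht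
  rw [← hlaw] at h
  exact (integrable_map_measure h.1 hX.aemeasurable).1 h

lemma mgf_le_exp_of_map_eq_expMeasure (hX : Measurable X) (hlaw : μ.map X = expMeasure r)
    (hr : 0 < r) (ht₀ : 0 ≤ t) (ht : 2 * t ≤ r) : mgf X μ t ≤ exp (2 * t / r) := by
  rw [← mgf_id_map hX.aemeasurable, hlaw, mgf_id_expMeasure hr.le (by linarith),
    show r / (r - t) = (1 - t / r)⁻¹ by field_simp, mul_div_assoc]
  exact inv_one_sub_le_exp_two_mul (by positivity) (by rw [div_le_iff₀ hr]; linarith)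

end ExpMeasure

section RandomVariables

variable {Ω ι : Type*} [MeasurableSpace Ω] {μ : Measure Ω} {X : ι → Ω → ℝ}

lemma measure_lt_eq_one_sub_measure_ge [IsProbabilityMeasure μ] {f : Ω → ℝ} (hf : Measurable f)
    (a : ℝ) : μ {ω | f ω < a} = 1 - μ {ω | a ≤ f ω} := by
  rw [← prob_compl_eq_one_sub (measurableSet_le measurable_const hf)]
  simp [Set.compl_ofPred]

lemma ProbabilityTheory.iIndepFun.measureReal_ge_sum_le_exp (hindep : iIndepFun X μ)
    (hmeas : ∀ i, Measurable (X i)) {s : Finset ι} {r : ι → ℝ}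
    (hlaw : ∀ i ∈ s, μ.map (X i) = expMeasure (r i)) (hr : ∀ i ∈ s, 0 < r i) {θ : ℝ}
    (hθ : 0 ≤ θ) (hθr : ∀ i ∈ s, 2 * θ ≤ r i) (ε : ℝ) :
    μ.real {ω | ε ≤ ∑ i ∈ s, X i ω} ≤ exp (-θ * ε + 2 * θ * ∑ i ∈ s, (r i)⁻¹) := by
  have := hindep.isProbabilityMeasure
  have hint : ∀ i ∈ s, Integrable (fun ω => exp (θ * X i ω)) μ := fun i hi =>
    integrable_exp_mul_of_map_eq_expMeasure (hmeas i) (hlaw i hi) (by linarith [hθr i hi, hr i hi])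
  calc μ.real {ω | ε ≤ ∑ i ∈ s, X i ω}
      ≤ exp (-θ * ε) * mgf (∑ i ∈ s, X i) μ θ := by
        simpa only [Finset.sum_apply] using
          measure_ge_le_exp_mul_mgf ε hθ (hindep.integrable_exp_mul_sum hmeas hint)
    _ = exp (-θ * ε) * ∏ i ∈ s, mgf (X i) μ θ := by rw [hindep.mgf_sum hmeas]
    _ ≤ exp (-θ * ε) * ∏ i ∈ s, exp (2 * θ / r i) := by
        gcongr with i hi
        · exact fun i _ => mgf_nonneg
        · exact mgf_le_exp_of_map_eq_expMeasure (hmeas i) (hlaw i hi) (hr i hi) hθ (hθr i hi)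
    _ = exp (-θ * ε + 2 * θ * ∑ i ∈ s, (r i)⁻¹) := by
        simp only [← exp_sum, ← exp_add, mul_sum, div_eq_mul_inv]

lemma ProbabilityTheory.iIndepFun.measure_biInter_inter_sum_lt (hindep : iIndepFun X μ)
    (hmeas : ∀ i, Measurable (X i)) {S T : Finset ι} (hST : Disjoint S T) {A : ι → Set ℝ}
    (hA : ∀ i, MeasurableSet (A i)) (a : ℝ) :
    μ ((⋂ i ∈ S, X i ⁻¹' A i) ∩ {ω | ∑ i ∈ T, X i ω < a}) =
      (∏ i ∈ S, μ (X i ⁻¹' A i)) * μ {ω | ∑ i ∈ T, X i ω < a} := by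
  have h := (hindep.indepFun_finset S T hST hmeas).measure_inter_preimage_eq_mul
    (Set.univ.pi fun i : S => A i) {y : T → ℝ | ∑ i, y i < a}
    (.univ_pi fun i => hA i) (measurableSet_lt (by fun_prop) measurable_const)
  have hS : (fun ω (i : S) => X i ω) ⁻¹' Set.univ.pi (fun i : S => A i) =
      ⋂ i ∈ S, X i ⁻¹' A i := by
    ext; simp
  have hT : (fun ω (i : T) => X i ω) ⁻¹' {y | ∑ i, y i < a} = {ω | ∑ i ∈ T, X i ω < a} := by
    ext ω; simp [Finset.sum_attach T (fun i => X i ω)]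
  rw [hS, hT] at h
  rw [h, hindep.meas_biInter fun i _ => ⟨A i, hA i, rfl⟩]

lemma measure_lt_tsum_le {f : ℕ → Ω → ℝ} {a : ℝ} (ha : 0 ≤ a) {b : ℝ≥0∞}
    (h : ∀ N, μ {ω | a ≤ ∑ k ∈ range N, f k ω} ≤ b) : μ {ω | a < ∑' k, f k ω} ≤ b := by
  set B : ℕ → Set Ω := fun M => ⋂ N, {ω | a ≤ ∑ k ∈ range (M + N), f k ω}
  have hB : Monotone B := monotone_nat_of_le_succ fun M ω hω => Set.mem_iInter.2 fun N => by
    simpa only [add_right_comm, add_assoc] using Set.mem_iInter.1 hω (N + 1)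
  have hsub : {ω | a < ∑' k, f k ω} ⊆ ⋃ M, B M := by
    intro ω hω
    have hsum : Summable (f · ω) := by
      by_contra hns
      simp only [Set.mem_ofPred_eq, tsum_eq_zero_of_not_summable hns] at hω
      linarith
    obtain ⟨M, hM⟩ := Filter.eventually_atTop.1
      (hsum.hasSum.tendsto_sum_nat.eventually (eventually_gt_nhds hω))
    exact Set.mem_iUnion.2 ⟨M, Set.mem_iInter.2 fun N => (hM (M + N) le_self_add).le⟩
  calc μ {ω | a < ∑' k, f k ω} ≤ μ (⋃ M, B M) := measure_mono hsub
    _ = ⨆ M, μ (B M) := hB.measure_iUnion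
    _ ≤ b := iSup_le fun M => (measure_mono (Set.iInter_subset _ 0)).trans (h M)

end RandomVariables

lemma sum_lt_mul_add_of_le_of_sum_filter_lt {x : ℕ → ℝ} {s : Finset ℕ} {M : ℕ} {ε b : ℝ}
    (hle : ∀ i ∈ s, i < M → x i ≤ ε) (hlt : ∑ i ∈ s with M ≤ i, x i < b) (hε : 0 ≤ ε) :
    ∑ i ∈ s, x i < M * ε + b := by
  have hcard : (#(s.filter (· < M)) : ℝ) ≤ M := by
    exact_mod_cast (card_le_card fun i hi => mem_range.2 (mem_filter.1 hi).2).trans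
      (card_range M).le
  have hsmall : ∑ i ∈ s with i < M, x i ≤ M * ε := calc
    _ ≤ ∑ i ∈ s with i < M, ε :=
        sum_le_sum fun i hi => hle i (mem_filter.1 hi).1 (mem_filter.1 hi).2
    _ ≤ M * ε := by rw [sum_const, nsmul_eq_mul]; gcongr
  rw [← sum_filter_add_sum_filter_not s (· < M)]
  simp_rw [not_lt]
  linarith

lemma poissonMeasure_Ici (ρ : ℝ≥0) (m : ℕ) :
    poissonMeasure ρ (Set.Ici m) = 1 - ENNReal.ofReal (∑ j ∈ range m, exp (-ρ) * ρ ^ j / j !) := by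
  rw [← Set.compl_Iio, prob_compl_eq_one_sub measurableSet_Iio, ← coe_range,
    ← sum_measure_singleton, ENNReal.ofReal_sum_of_nonneg fun j _ => by positivity]
  simp only [poissonMeasure_singleton]

lemma sum_range_exp_neg_mul_pow_div_factorial_le {ρ : ℝ} (hρ : 0 ≤ ρ) (m : ℕ) :
    ∑ j ∈ range m, exp (-ρ) * ρ ^ j / j ! ≤ 2 ^ m * exp (-ρ / 2) := calc
  _ ≤ ∑ j ∈ range m, exp (-ρ) * 2 ^ m * ((ρ / 2) ^ j / j !) := by
      refine sum_le_sum fun j hj => ?_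
      rw [mul_assoc, mul_div_assoc, ← mul_div_assoc (2 ^ m)]
      gcongr
      calc ρ ^ j = 2 ^ j * (ρ / 2) ^ j := by rw [← mul_pow]; ring
        _ ≤ 2 ^ m * (ρ / 2) ^ j := by
          gcongr
          · norm_num
          · exact (mem_range.1 hj).le
  _ ≤ exp (-ρ) * 2 ^ m * exp (ρ / 2) := by
      rw [← mul_sum]
      gcongr
      exact sum_le_exp_of_nonneg (by positivity) m
  _ = 2 ^ m * exp (-ρ / 2) := by
      rw [mul_right_comm, ← exp_add]
      ring_nf

section Kingman

/-- The total merger rate `(n + 1).choose 2` while `n + 1` blocks remain. -/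
noncomputable def kingmanRate (n : ℕ) : ℝ := n * (n + 1) / 2

lemma kingmanRate_pos {n : ℕ} (hn : 1 ≤ n) : 0 < kingmanRate n := by
  have : (1 : ℝ) ≤ n := by exact_mod_cast hn
  unfold kingmanRate
  positivity

lemma kingmanRate_mono : Monotone kingmanRate := fun m n h => by
  have : (m : ℝ) ≤ n := by exact_mod_cast h
  unfold kingmanRate
  gcongr

-- In the shape of `Finset.sum_Ico_sub`.
lemma inv_kingmanRate {n : ℕ} (hn : 1 ≤ n) :
    (kingmanRate n)⁻¹ = -2 / ((n + 1 : ℕ) : ℝ) - -2 / n := by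
  have : (1 : ℝ) ≤ n := by exact_mod_cast hn
  unfold kingmanRate
  push_cast
  field_simp
  ring

lemma sum_inv_kingmanRate_le {m : ℕ} (hm : 1 ≤ m) {s : Finset ℕ} (hs : ∀ i ∈ s, m ≤ i) :
    ∑ i ∈ s, (kingmanRate i)⁻¹ ≤ 2 / m := by
  set n := m + s.sup id + 1
  have hsub : s ⊆ Ico m n := fun i hi =>
    mem_Ico.2 ⟨hs i hi, by have := le_sup (f := id) hi; simp only [id] at this; omega⟩
  calc ∑ i ∈ s, (kingmanRate i)⁻¹ ≤ ∑ i ∈ Ico m n, (kingmanRate i)⁻¹ :=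
        sum_le_sum_of_subset_of_nonneg hsub fun i hi _ =>
          (inv_pos.2 (kingmanRate_pos (hm.trans (mem_Ico.1 hi).1))).le
    _ = 2 / m - 2 / n := by
        rw [sum_congr rfl fun i hi => inv_kingmanRate (hm.trans (mem_Ico.1 hi).1),
          sum_Ico_sub (fun i : ℕ => -2 / (i : ℝ)) (by omega)]
        ring
    _ ≤ 2 / m := sub_le_self _ (by positivity)

variable {Ω : Type*} [MeasurableSpace Ω] {μ : Measure Ω} {X : ℕ → Ω → ℝ}

lemma ProbabilityTheory.iIndepFun.measure_ge_sum_le_exp_of_kingmanRate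
    (hindep : iIndepFun X μ) (hmeas : ∀ n, Measurable (X n))
    (hlaw : ∀ n, 1 ≤ n → μ.map (X n) = expMeasure (kingmanRate n))
    {m : ℕ} (hm : 1 ≤ m) {s : Finset ℕ} (hs : ∀ i ∈ s, m ≤ i) (ε : ℝ) :
    μ {ω | ε ≤ ∑ i ∈ s, X i ω} ≤ ENNReal.ofReal (exp ((m + 1) * (1 - m * ε / 4))) := by
  have := hindep.isProbabilityMeasure
  have hr : ∀ i ∈ s, 0 < kingmanRate i := fun i hi => kingmanRate_pos (hm.trans (hs i hi))
  have hθ : 0 ≤ kingmanRate m / 2 := by linarith [kingmanRate_pos hm]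
  rw [← ofReal_measureReal]
  refine ENNReal.ofReal_le_ofReal ((hindep.measureReal_ge_sum_le_exp hmeas
    (fun i hi => hlaw i (hm.trans (hs i hi))) hr hθ
    (fun i hi => by linarith [kingmanRate_mono (hs i hi)]) ε).trans (exp_le_exp.2 ?_))
  calc -(kingmanRate m / 2) * ε + 2 * (kingmanRate m / 2) * ∑ i ∈ s, (kingmanRate i)⁻¹
      ≤ -(kingmanRate m / 2) * ε + 2 * (kingmanRate m / 2) * (2 / m) := by
        gcongr
        exact sum_inv_kingmanRate_le hm hs
    _ = (m + 1) * (1 - m * ε / 4) := by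
        unfold kingmanRate
        field_simp
        ring

lemma ProbabilityTheory.iIndepFun.inv_two_le_measure_sum_lt_of_kingmanRate
    (hindep : iIndepFun X μ) (hmeas : ∀ n, Measurable (X n))
    (hlaw : ∀ n, 1 ≤ n → μ.map (X n) = expMeasure (kingmanRate n)) {δ : ℝ} {M : ℕ}
    (hM : 16 ≤ M * δ) {s : Finset ℕ} (hs : ∀ i ∈ s, M ≤ i) :
    2⁻¹ ≤ μ {ω | ∑ i ∈ s, X i ω < δ / 2} := by
  have := hindep.isProbabilityMeasure
  have hM₁ : 1 ≤ M := Nat.one_le_iff_ne_zero.2 fun h => by simp [h] at hM; linarith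
  have hexp : exp ((M + 1) * (1 - M * (δ / 2) / 4)) ≤ 2⁻¹ := calc
    _ ≤ exp (-1) := exp_le_exp.2 (by nlinarith)
    _ ≤ 2⁻¹ := by
      rw [exp_neg, inv_le_inv₀ (exp_pos 1) two_pos]
      linarith [add_one_le_exp 1]
  rw [measure_lt_eq_one_sub_measure_ge (by fun_prop), ← ENNReal.one_sub_inv_two]
  refine tsub_le_tsub_left
    ((hindep.measure_ge_sum_le_exp_of_kingmanRate hmeas hlaw hM₁ hs (δ / 2)).trans ?_) 1
  rw [← ENNReal.ofReal_ofNat, ← ENNReal.ofReal_inv_of_pos two_pos]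
  exact ENNReal.ofReal_le_ofReal hexp

lemma ProbabilityTheory.iIndepFun.exists_pos_measure_ge_sum_le_one_sub_of_kingmanRate
    (hindep : iIndepFun X μ) (hmeas : ∀ n, Measurable (X n))
    (hlaw : ∀ n, 1 ≤ n → μ.map (X n) = expMeasure (kingmanRate n)) {δ : ℝ} (hδ : 0 < δ) :
    ∃ c : ℝ, 0 < c ∧ ∀ s : Finset ℕ, (∀ i ∈ s, 1 ≤ i) →
      μ {ω | δ ≤ ∑ i ∈ s, X i ω} ≤ 1 - ENNReal.ofReal c := by
  have := hindep.isProbabilityMeasure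
  set M := ⌈16 / δ⌉₊
  have hM : 16 ≤ M * δ := (div_le_iff₀ hδ).1 (Nat.le_ceil _)
  have hM₀ : (0 : ℝ) < M := by nlinarith
  set ε := δ / (2 * M)
  set c : ℝ≥0∞ := (∏ i ∈ Ico 1 M, μ (X i ⁻¹' Set.Iic ε)) * 2⁻¹
  have hc₀ : c ≠ 0 := by
    refine mul_ne_zero (prod_ne_zero_iff.2 fun i hi => ?_)
      (ENNReal.inv_ne_zero.2 ENNReal.ofNat_ne_top)
    have hi : 1 ≤ i := (mem_Ico.1 hi).1
    rw [← Measure.map_apply (hmeas i) measurableSet_Iic, hlaw i hi]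
    exact (expMeasure_Iic_pos (kingmanRate_pos hi) (by positivity)).ne'
  have hc : c ≠ ⊤ :=
    ENNReal.mul_ne_top (ENNReal.prod_ne_top fun _ _ => measure_ne_top _ _) (by simp)
  refine ⟨c.toReal, ENNReal.toReal_pos hc₀ hc, fun s hs => ?_⟩
  rw [ENNReal.ofReal_toReal hc, ← ENNReal.sub_sub_cancel ENNReal.one_ne_top prob_le_one,
    ← measure_lt_eq_one_sub_measure_ge (by fun_prop)]
  refine tsub_le_tsub_left ?_ 1
  set S := s.filter (· < M)
  set T := s.filter (M ≤ ·)
  have hsub : (⋂ i ∈ S, X i ⁻¹' Set.Iic ε) ∩ {ω | ∑ i ∈ T, X i ω < δ / 2} ⊆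
      {ω | ∑ i ∈ s, X i ω < δ} := by
    rintro ω ⟨hS, hT⟩
    simp only [Set.mem_iInter, Set.mem_preimage, Set.mem_Iic, Set.mem_ofPred_eq] at hS hT ⊢
    calc ∑ i ∈ s, X i ω < M * ε + δ / 2 := sum_lt_mul_add_of_le_of_sum_filter_lt
          (fun i hi hiM => hS i (mem_filter.2 ⟨hi, hiM⟩)) hT (by positivity)
      _ = δ := by simp only [ε]; field_simp; ring
  calc c ≤ (∏ i ∈ S, μ (X i ⁻¹' Set.Iic ε)) * μ {ω | ∑ i ∈ T, X i ω < δ / 2} := by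
        refine mul_le_mul' ?_ (hindep.inv_two_le_measure_sum_lt_of_kingmanRate hmeas hlaw hM
          fun i hi => (mem_filter.1 hi).2)
        exact prod_le_prod_of_subset_of_le_one' (fun i hi => mem_Ico.2 ⟨hs i (mem_filter.1 hi).1,
          (mem_filter.1 hi).2⟩) fun _ _ _ => prob_le_one
    _ = μ ((⋂ i ∈ S, X i ⁻¹' Set.Iic ε) ∩ {ω | ∑ i ∈ T, X i ω < δ / 2}) :=
        (hindep.measure_biInter_inter_sum_lt hmeas (disjoint_filter.2 fun _ _ => not_le.2)
          (fun _ => measurableSet_Iic) _).symm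
    _ ≤ μ {ω | ∑ i ∈ s, X i ω < δ} := measure_mono hsub

end Kingman

lemma two_pow_mul_exp_neg_half_le {c δ ρ : ℝ} {m : ℕ} (hc : 0 < c) (hδ : 0 < δ)
    (hρδ : 128 ≤ ρ * δ) (hρc : -4 * log c ≤ ρ) (hm : m ^ 2 * δ ≤ 8 * ρ) :
    2 ^ m * exp (-ρ / 2) ≤ c := by
  have hρ : 0 < ρ := by nlinarith
  have hsq : 16 * m ^ 2 ≤ ρ ^ 2 := le_of_mul_le_mul_right (by nlinarith) hδ
  have hmρ : (m : ℝ) ≤ ρ / 4 := by nlinarith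
  calc 2 ^ m * exp (-ρ / 2) ≤ exp 1 ^ m * exp (-ρ / 2) := by
        gcongr
        linarith [add_one_le_exp 1]
    _ ≤ exp (log c) := by
        rw [← exp_nat_mul, ← exp_add]
        exact exp_le_exp.2 (by linarith)
    _ = c := exp_log hc

lemma exp_le_exp_neg_mul_div_pow {δ ρ : ℝ} {m : ℕ} (hδ : 0 < δ) (hρδ : 32 ≤ ρ * δ) (hm : 1 ≤ m)
    (h : 8 * ρ < m ^ 2 * δ) : exp ((m + 1) * (1 - m * δ / 4)) ≤ exp (-ρ) * (ρ / m) ^ m := by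
  have hm' : (1 : ℝ) ≤ m := by exact_mod_cast hm
  have hρ : 0 < ρ := by nlinarith
  have hmδ : 16 < m * δ := by nlinarith
  have hlog : m * (1 - m / ρ) ≤ m * log (ρ / m) := by
    gcongr
    simpa using one_sub_inv_le_log_of_pos (div_pos hρ (by positivity))
  have hq : m ^ 2 / ρ ≤ m ^ 2 * δ / 32 := by
    rw [div_le_div_iff₀ hρ (by norm_num)]
    nlinarith
  rw [← exp_log (div_pos hρ (by positivity)), ← exp_nat_mul, ← exp_add]
  refine exp_le_exp.2 ?_
  have : m * (1 - m / ρ) = m - m ^ 2 / ρ := by ring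
  nlinarith

lemma one_sub_ofReal_le_poissonMeasure_Ici {c δ : ℝ} {ρ : ℝ≥0} {m : ℕ} (hc : 0 < c)
    (hδ : 0 < δ) (hρδ : 128 ≤ ρ * δ) (hρc : -4 * log c ≤ ρ) (hm : m ^ 2 * δ ≤ 8 * ρ) :
    1 - ENNReal.ofReal c ≤ poissonMeasure ρ (Set.Ici m) := by
  rw [poissonMeasure_Ici]
  exact tsub_le_tsub_left (ENNReal.ofReal_le_ofReal
    ((sum_range_exp_neg_mul_pow_div_factorial_le ρ.2 m).trans
      (two_pow_mul_exp_neg_half_le hc hδ hρδ hρc hm))) 1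

lemma ofReal_exp_le_poissonMeasure_Ici {δ : ℝ} {ρ : ℝ≥0} {m : ℕ} (hδ : 0 < δ)
    (hρδ : 32 ≤ ρ * δ) (hm : 1 ≤ m) (h : 8 * ρ < m ^ 2 * δ) :
    ENNReal.ofReal (exp ((m + 1) * (1 - m * δ / 4))) ≤ poissonMeasure ρ (Set.Ici m) := calc
  _ ≤ poissonMeasure ρ {m} := by
      rw [poissonMeasure_singleton]
      refine ENNReal.ofReal_le_ofReal ((exp_le_exp_neg_mul_div_pow hδ hρδ hm h).trans ?_)
      rw [div_pow, mul_div_assoc]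
      gcongr
      exact_mod_cast Nat.factorial_le_pow m
  _ ≤ poissonMeasure ρ (Set.Ici m) := measure_mono (by simp)

theorem kingman_blocks_poisson_domination_general
    {Ω : Type*} [MeasurableSpace Ω] (μ : Measure Ω) [IsProbabilityMeasure μ]
    (Υ : ℕ → Ω → ℝ)
    (hmeas : ∀ n, Measurable (Υ n))
    (hindep : iIndepFun Υ μ)
    (hlaw : ∀ n : ℕ, 1 ≤ n →
      Measure.map (Υ n) μ = expMeasure ((n : ℝ) * (n + 1) / 2))
    (δ : ℝ) (hδ : 0 < δ)
    (K : Ω → ℕ)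
    (hKchar : ∀ n : ℕ, {ω | n < K ω} = {ω | δ < ∑' k : ℕ, Υ (n + k) ω}) :
    ∃ ρ : NNReal, 0 < ρ ∧ ∀ n : ℕ, 1 ≤ n →
      μ {ω | n ≤ K ω} ≤ poissonMeasure ρ {m : ℕ | n ≤ 1 + m} := by
  obtain ⟨c, hc, hbulk⟩ := hindep.exists_pos_measure_ge_sum_le_one_sub_of_kingmanRate hmeas hlaw hδ
  obtain ⟨ρ, hρδ, hρc⟩ : ∃ ρ : ℝ≥0, 128 ≤ ρ * δ ∧ -4 * log c ≤ ρ :=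
    ⟨(max (128 / δ) (-4 * log c)).toNNReal,
      (div_le_iff₀ hδ).1 ((le_max_left _ _).trans (Real.le_coe_toNNReal _)),
      (le_max_right _ _).trans (Real.le_coe_toNNReal _)⟩
  refine ⟨ρ, NNReal.coe_pos.1 (by nlinarith), fun n hn => ?_⟩
  obtain rfl | ⟨m, hm, rfl⟩ : n = 1 ∨ ∃ m, 1 ≤ m ∧ n = m + 1 :=
    hn.eq_or_lt.imp Eq.symm fun h => ⟨n - 1, by omega, by omega⟩
  · simpa using prob_le_one
  have hPo : {m' : ℕ | m + 1 ≤ 1 + m'} = Set.Ici m := by ext; simp [add_comm]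
  rw [hPo, show {ω | m + 1 ≤ K ω} = {ω | m < K ω} from rfl, hKchar m]
  refine measure_lt_tsum_le hδ.le fun N => ?_
  have hs : ∀ i ∈ Ico m (m + N), m ≤ i := fun i hi => (mem_Ico.1 hi).1
  have hsum : ∀ ω, ∑ k ∈ range N, Υ (m + k) ω = ∑ i ∈ Ico m (m + N), Υ i ω := fun ω => by
    rw [sum_Ico_eq_sum_range, add_tsub_cancel_left]
  simp_rw [hsum]
  by_cases hreg : m ^ 2 * δ ≤ 8 * ρ
  · exact (hbulk _ fun i hi => hm.trans (hs i hi)).trans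
      (one_sub_ofReal_le_poissonMeasure_Ici hc hδ hρδ hρc hreg)
  · exact (hindep.measure_ge_sum_le_exp_of_kingmanRate hmeas hlaw hm hs δ).trans
      (ofReal_exp_le_poissonMeasure_Ici hδ (by linarith) hm (not_le.1 hreg))

/-- The number of blocks of the Kingman coalescent at a fixed time `δ > 0`, started from
infinitely many blocks, is stochastically dominated by `1 + Poisson(ρ)` for a suitable
`ρ = ρ(δ)`.  Here `K` is the block count at time `δ`, characterized by
`#K > n ⟺ ∑_{k ≥ n} Υ_k > δ`, where the `Υ_k` are independent exponentials of rate
`k(k+1)/2` (the holding time with `k+1` blocks). -/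
theorem kingman_blocks_poisson_domination
    {Ω : Type*} [MeasurableSpace Ω] (μ : Measure Ω) [IsProbabilityMeasure μ]
    (Υ : ℕ → Ω → ℝ)
    (hmeas : ∀ n, Measurable (Υ n))
    (hindep : iIndepFun Υ μ)
    (hlaw : ∀ n : ℕ, 1 ≤ n →
      Measure.map (Υ n) μ = expMeasure ((n : ℝ) * (n + 1) / 2))
    (δ : ℝ) (hδ : 0 < δ)
    (K : Ω → ℕ) (hK : Measurable K)
    (hKchar : ∀ n : ℕ, {ω | n < K ω} = {ω | δ < ∑' k : ℕ, Υ (n + k) ω}) :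
    ∃ ρ : NNReal, 0 < ρ ∧ ∀ n : ℕ, 1 ≤ n →
      μ {ω | n ≤ K ω} ≤ poissonMeasure ρ {m : ℕ | n ≤ 1 + m} :=
  kingman_blocks_poisson_domination_general μ Υ hmeas hindep hlaw δ hδ K hKchar
end

section
/- Under the assumptions of the Liggett–Spitzer supermartingale (kernel $a$, measure $\alpha$ with $\sum_y a(x,y)\alpha(\{y\})\leq\Gamma\alpha(\{x\})$, independent walks with $\eta_0=\sum_i\delta_{X_0^i}\in\mathcal{E}_\alpha$ a.s.), for every $t\geq 0$ the configuration $\eta_t=\sum_{i\in\mathcal{I}}\delta_{X_t^i}$ satisfies $\mathbf{P}\{\eta_t\in\mathcal{E}_\alpha\}=1$; in particular $\eta_t$ is locally finite almost surely. -/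
open MeasureTheory ProbabilityTheory NNReal

/-- `n`-step transition weights of the discrete kernel `a` on `ℤ²`. -/
noncomputable def aIter (a : (ℤ × ℤ) → (ℤ × ℤ) → ℝ) : ℕ → (ℤ × ℤ) → (ℤ × ℤ) → ℝ
  | 0 => fun x y => if x = y then 1 else 0
  | (n + 1) => fun x y => ∑' z : ℤ × ℤ, a x z * aIter a n z y

/-- Transition probabilities of the rate-1 continuous-time random walk with jump kernel `a`. -/
noncomputable def transP (a : (ℤ × ℤ) → (ℤ × ℤ) → ℝ) (t : ℝ) (x y : ℤ × ℤ) : ℝ :=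
  ∑' n : ℕ, Real.exp (-t) * t ^ n / (Nat.factorial n) * aIter a n x y

/-!
The weight `α` is superharmonic up to the factor `Γ` for the jump kernel, so the transition
semigroup satisfies `P_t α ≤ e^{(Γ-1)t} α`. By the Markov property, `E[α(X^i_t) | ℱ_0]` is then
bounded by `e^{(Γ-1)t} α(X^i_0)`, and summing over the countably many particles shows that
`∑_i α(X^i_t)` has finite integral on each `ℱ_0`-event `{∑_i α(X^i_0) ≤ M}`. These events exhaust
`Ω` up to a null set, so `∑_i α(X^i_t) < ∞` a.s. Since `α > 0`, a convergent sum
`∑_i α(X^i_t)` leaves only finitely many particles at each site.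
-/

open scoped ENNReal

theorem Summable.mul_right_of_mem_Icc {ι : Type*} {f g : ι → ℝ} (hf : Summable f)
    (hf0 : ∀ i, 0 ≤ f i) (hg : ∀ i, g i ∈ Set.Icc (0 : ℝ) 1) :
    Summable fun i => f i * g i :=
  .of_nonneg_of_le (fun i => mul_nonneg (hf0 i) (hg i).1)
    (fun i => mul_le_of_le_one_right (hf0 i) (hg i).2) hf

theorem tsum_le_of_tsum_ofReal_le {ι : Type*} {f : ι → ℝ} {r : ℝ} (hf : ∀ i, 0 ≤ f i)
    (hr : 0 ≤ r) (h : ∑' i, ENNReal.ofReal (f i) ≤ ENNReal.ofReal r) : ∑' i, f i ≤ r :=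
  calc ∑' i, f i = ∑' i, (ENNReal.ofReal (f i)).toReal := by
        simp only [ENNReal.toReal_ofReal (hf _)]
    _ = (∑' i, ENNReal.ofReal (f i)).toReal :=
        (ENNReal.tsum_toReal_eq fun _ => ENNReal.ofReal_ne_top).symm
    _ ≤ (ENNReal.ofReal r).toReal := ENNReal.toReal_mono ENNReal.ofReal_ne_top h
    _ = r := ENNReal.toReal_ofReal hr

theorem Summable.finite_fiber {ι β : Type*} {α : β → ℝ} {Y : ι → β}
    (h : Summable fun i => α (Y i)) {x : β} (hx : 0 < α x) : {i | Y i = x}.Finite := by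
  have hconst : Summable fun _ : {i | Y i = x} => α x :=
    (h.subtype _).congr fun i => congrArg α i.2
  exact Set.finite_univ_iff.1 (Set.Finite.of_summable_const hx hconst)

section Kernel

variable {a : (ℤ × ℤ) → (ℤ × ℤ) → ℝ}

theorem aIter_mem_Icc (ha_nonneg : ∀ x y, 0 ≤ a x y) (ha : ∀ x, HasSum (a x) 1) :
    ∀ n x y, aIter a n x y ∈ Set.Icc (0 : ℝ) 1 := by
  intro n
  induction n with
  | zero => intro x y; by_cases h : x = y <;> simp [aIter, h]
  | succ n ih =>
    intro x y
    have hle : ∀ z, a x z * aIter a n z y ≤ a x z := fun z =>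
      mul_le_of_le_one_right (ha_nonneg x z) (ih z y).2
    refine ⟨tsum_nonneg fun z => mul_nonneg (ha_nonneg x z) (ih z y).1, ?_⟩
    calc aIter a (n + 1) x y = ∑' z, a x z * aIter a n z y := rfl
      _ ≤ ∑' z, a x z :=
        ((ha x).summable.mul_right_of_mem_Icc (ha_nonneg x) (ih · y)).tsum_le_tsum hle
          (ha x).summable
      _ = 1 := (ha x).tsum_eq

theorem ofReal_aIter_succ (ha_nonneg : ∀ x y, 0 ≤ a x y) (ha : ∀ x, HasSum (a x) 1)
    (n : ℕ) (x y : ℤ × ℤ) :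
    ENNReal.ofReal (aIter a (n + 1) x y) =
      ∑' z, ENNReal.ofReal (a x z) * ENNReal.ofReal (aIter a n z y) := by
  have hIcc := aIter_mem_Icc ha_nonneg ha n
  change ENNReal.ofReal (∑' z, a x z * aIter a n z y) = _
  rw [ENNReal.ofReal_tsum_of_nonneg (fun z => mul_nonneg (ha_nonneg x z) (hIcc z y).1)
    ((ha x).summable.mul_right_of_mem_Icc (ha_nonneg x) (hIcc · y))]
  exact tsum_congr fun z => ENNReal.ofReal_mul (ha_nonneg x z)

theorem tsum_ofReal_aIter_mul_le (ha_nonneg : ∀ x y, 0 ≤ a x y) (ha : ∀ x, HasSum (a x) 1)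
    {w : ℤ × ℤ → ℝ≥0∞} {K : ℝ≥0∞}
    (hK : ∀ x, ∑' y, ENNReal.ofReal (a x y) * w y ≤ K * w x) :
    ∀ n x, ∑' y, ENNReal.ofReal (aIter a n x y) * w y ≤ K ^ n * w x := by
  intro n
  induction n with
  | zero =>
    intro x
    have hdelta : ∀ y, ENNReal.ofReal (aIter a 0 x y) * w y = if y = x then w x else 0 := by
      intro y
      by_cases h : y = x
      · simp [aIter, h]
      · simp [aIter, h, Ne.symm h]
    simp only [hdelta, tsum_ite_eq, pow_zero, one_mul, le_refl]
  | succ n ih =>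
    intro x
    calc ∑' y, ENNReal.ofReal (aIter a (n + 1) x y) * w y
        = ∑' z, ENNReal.ofReal (a x z) * ∑' y, ENNReal.ofReal (aIter a n z y) * w y := by
          simp only [ofReal_aIter_succ ha_nonneg ha, ← ENNReal.tsum_mul_right,
            ← ENNReal.tsum_mul_left, mul_assoc]
          exact ENNReal.tsum_comm
      _ ≤ ∑' z, ENNReal.ofReal (a x z) * (K ^ n * w z) :=
          ENNReal.tsum_le_tsum fun z => mul_le_mul_right (ih z) _
      _ = K ^ n * ∑' z, ENNReal.ofReal (a x z) * w z := by
          rw [← ENNReal.tsum_mul_left]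
          exact tsum_congr fun z => by ring
      _ ≤ K ^ n * (K * w x) := mul_le_mul_right (hK x) _
      _ = K ^ (n + 1) * w x := by ring

theorem ofReal_transP (ha_nonneg : ∀ x y, 0 ≤ a x y) (ha : ∀ x, HasSum (a x) 1)
    {t : ℝ} (ht : 0 ≤ t) (x y : ℤ × ℤ) :
    ENNReal.ofReal (transP a t x y) = ∑' n : ℕ,
      ENNReal.ofReal (Real.exp (-t) * t ^ n / n.factorial) * ENNReal.ofReal (aIter a n x y) := by
  have hp0 : ∀ n : ℕ, 0 ≤ Real.exp (-t) * t ^ n / n.factorial := fun n => by positivity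
  have hp : Summable fun n : ℕ => Real.exp (-t) * t ^ n / n.factorial := by
    simpa only [mul_div_assoc] using (Real.summable_pow_div_factorial t).mul_left (Real.exp (-t))
  have hIcc n := aIter_mem_Icc ha_nonneg ha n x y
  rw [transP, ENNReal.ofReal_tsum_of_nonneg (fun n => mul_nonneg (hp0 n) (hIcc n).1)
    (hp.mul_right_of_mem_Icc hp0 hIcc)]
  exact tsum_congr fun n => ENNReal.ofReal_mul (hp0 n)

theorem tsum_ofReal_transP_mul_le (ha_nonneg : ∀ x y, 0 ≤ a x y) (ha : ∀ x, HasSum (a x) 1)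
    {w : ℤ × ℤ → ℝ≥0∞} {Γ : ℝ} (hΓ0 : 0 ≤ Γ)
    (hK : ∀ x, ∑' y, ENNReal.ofReal (a x y) * w y ≤ ENNReal.ofReal Γ * w x)
    {t : ℝ} (ht : 0 ≤ t) (x : ℤ × ℤ) :
    ∑' y, ENNReal.ofReal (transP a t x y) * w y ≤
      ENNReal.ofReal (Real.exp ((Γ - 1) * t)) * w x := by
  set p : ℕ → ℝ := fun n => Real.exp (-t) * t ^ n / n.factorial
  have hp0 : ∀ n, 0 ≤ p n := fun n => by positivity
  -- the Poisson average of `Γ ^ N` is `e^{(Γ-1)t}`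
  have hpoisson : HasSum (fun n => p n * Γ ^ n) (Real.exp ((Γ - 1) * t)) := by
    have h := (NormedSpace.expSeries_div_hasSum_exp (t * Γ)).mul_left (Real.exp (-t))
    rw [← Real.exp_eq_exp_ℝ, ← Real.exp_add] at h
    have hterm : (fun n => p n * Γ ^ n) = fun n => Real.exp (-t) * ((t * Γ) ^ n / n.factorial) := by
      funext n
      simp only [p, mul_pow]
      ring
    rwa [hterm, show (Γ - 1) * t = -t + t * Γ by ring]
  calc ∑' y, ENNReal.ofReal (transP a t x y) * w y
      = ∑' n, ENNReal.ofReal (p n) * ∑' y, ENNReal.ofReal (aIter a n x y) * w y := by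
        simp only [ofReal_transP ha_nonneg ha ht, ← ENNReal.tsum_mul_right,
          ← ENNReal.tsum_mul_left, mul_assoc, p]
        exact ENNReal.tsum_comm
    _ ≤ ∑' n, ENNReal.ofReal (p n) * (ENNReal.ofReal Γ ^ n * w x) :=
        ENNReal.tsum_le_tsum fun n =>
          mul_le_mul_right (tsum_ofReal_aIter_mul_le ha_nonneg ha hK n x) _
    _ = ENNReal.ofReal (∑' n, p n * Γ ^ n) * w x := by
        rw [ENNReal.ofReal_tsum_of_nonneg (fun n => mul_nonneg (hp0 n) (pow_nonneg hΓ0 n))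
          hpoisson.summable, ← ENNReal.tsum_mul_right]
        exact tsum_congr fun n => by
          rw [ENNReal.ofReal_mul (hp0 n), ENNReal.ofReal_pow hΓ0, mul_assoc]
    _ = ENNReal.ofReal (Real.exp ((Γ - 1) * t)) * w x := by rw [hpoisson.tsum_eq]

theorem transP_nonneg (ha_nonneg : ∀ x y, 0 ≤ a x y) (ha : ∀ x, HasSum (a x) 1)
    {t : ℝ} (ht : 0 ≤ t) (x y : ℤ × ℤ) : 0 ≤ transP a t x y :=
  tsum_nonneg fun n => mul_nonneg (by positivity) (aIter_mem_Icc ha_nonneg ha n x y).1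

theorem tsum_ofReal_mul_ofReal_le (ha_nonneg : ∀ x y, 0 ≤ a x y) (ha : ∀ x, HasSum (a x) 1)
    {α : ℤ × ℤ → ℝ} (hα0 : ∀ x, 0 ≤ α x) (hα_sum : Summable α)
    {Γ : ℝ} (hΓ0 : 0 ≤ Γ) (hΓ : ∀ x, ∑' y, a x y * α y ≤ Γ * α x) (x : ℤ × ℤ) :
    ∑' y, ENNReal.ofReal (a x y) * ENNReal.ofReal (α y) ≤
      ENNReal.ofReal Γ * ENNReal.ofReal (α x) := by
  have hIcc : ∀ y, a x y ∈ Set.Icc (0 : ℝ) 1 := fun y =>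
    ⟨ha_nonneg x y, le_hasSum (ha x) y fun j _ => ha_nonneg x j⟩
  have hs : Summable fun y => a x y * α y :=
    (hα_sum.mul_right_of_mem_Icc hα0 hIcc).congr fun y => mul_comm _ _
  calc ∑' y, ENNReal.ofReal (a x y) * ENNReal.ofReal (α y)
      = ENNReal.ofReal (∑' y, a x y * α y) := by
        rw [ENNReal.ofReal_tsum_of_nonneg (fun y => mul_nonneg (ha_nonneg x y) (hα0 y)) hs]
        exact tsum_congr fun y => (ENNReal.ofReal_mul (ha_nonneg x y)).symm
    _ ≤ ENNReal.ofReal (Γ * α x) := ENNReal.ofReal_le_ofReal (hΓ x)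
    _ = ENNReal.ofReal Γ * ENNReal.ofReal (α x) := ENNReal.ofReal_mul hΓ0

theorem tsum_transP_mul_le (ha_nonneg : ∀ x y, 0 ≤ a x y) (ha : ∀ x, HasSum (a x) 1)
    {α : ℤ × ℤ → ℝ} (hα0 : ∀ x, 0 ≤ α x) (hα_sum : Summable α)
    {Γ : ℝ} (hΓ0 : 0 ≤ Γ) (hΓ : ∀ x, ∑' y, a x y * α y ≤ Γ * α x)
    {t : ℝ} (ht : 0 ≤ t) (x : ℤ × ℤ) :
    ∑' y, transP a t x y * α y ≤ Real.exp ((Γ - 1) * t) * α x := by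
  refine tsum_le_of_tsum_ofReal_le (fun y => mul_nonneg (transP_nonneg ha_nonneg ha ht x y) (hα0 y))
    (mul_nonneg (Real.exp_pos _).le (hα0 x)) ?_
  simp only [ENNReal.ofReal_mul (transP_nonneg ha_nonneg ha ht x _),
    ENNReal.ofReal_mul (Real.exp_pos _).le]
  exact tsum_ofReal_transP_mul_le ha_nonneg ha hΓ0
    (tsum_ofReal_mul_ofReal_le ha_nonneg ha hα0 hα_sum hΓ0 hΓ) ht x

end Kernel

section CondExp

variable {Ω : Type*} {m m0 : MeasurableSpace Ω} {μ : Measure Ω}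

theorem ae_lt_top_of_setLIntegral_le [IsFiniteMeasure μ] (hm : m ≤ m0) {F G : Ω → ℝ≥0∞}
    (hF : AEMeasurable F μ) (hG : Measurable[m] G)
    (hFG : ∀ s, MeasurableSet[m] s → ∫⁻ ω in s, F ω ∂μ ≤ ∫⁻ ω in s, G ω ∂μ)
    (hG_lt : ∀ᵐ ω ∂μ, G ω < ∞) : ∀ᵐ ω ∂μ, F ω < ∞ := by
  have hlevel : ∀ M : ℕ, ∀ᵐ ω ∂μ, G ω ≤ M → F ω < ∞ := by
    intro M
    have hs : MeasurableSet[m] {ω | G ω ≤ M} := measurableSet_le hG measurable_const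
    have hfin : ∫⁻ ω in {ω | G ω ≤ M}, F ω ∂μ ≠ ∞ := by
      refine ne_top_of_le_ne_top ?_ ((hFG _ hs).trans (setLIntegral_mono' (hm _ hs) fun ω hω => hω))
      rw [setLIntegral_const]
      exact ENNReal.mul_ne_top (ENNReal.natCast_ne_top M) (measure_ne_top μ _)
    exact (ae_restrict_iff' (hm _ hs)).1 (ae_lt_top' hF.restrict hfin)
  filter_upwards [ae_all_iff.2 hlevel, hG_lt] with ω hF hG
  obtain ⟨M, hM⟩ := ENNReal.exists_nat_gt hG.ne
  exact hF M hM.le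

theorem setLIntegral_ofReal_le_of_condExp_le (hm : m ≤ m0) [SigmaFinite (μ.trim hm)]
    {f g : Ω → ℝ} (hf : Integrable f μ) (hf0 : 0 ≤ᵐ[μ] f) (hfg : μ[f|m] ≤ᵐ[μ] g)
    {s : Set Ω} (hs : MeasurableSet[m] s) :
    ∫⁻ ω in s, ENNReal.ofReal (f ω) ∂μ ≤ ∫⁻ ω in s, ENNReal.ofReal (g ω) ∂μ :=
  calc ∫⁻ ω in s, ENNReal.ofReal (f ω) ∂μ
      = ENNReal.ofReal (∫ ω in s, f ω ∂μ) :=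
        (ofReal_integral_eq_lintegral_ofReal hf.restrict (ae_restrict_of_ae hf0)).symm
    _ = ENNReal.ofReal (∫ ω in s, (μ[f|m]) ω ∂μ) := by rw [setIntegral_condExp hm hf hs]
    _ = ∫⁻ ω in s, ENNReal.ofReal ((μ[f|m]) ω) ∂μ :=
        ofReal_integral_eq_lintegral_ofReal integrable_condExp.restrict
          (ae_restrict_of_ae (condExp_nonneg hf0))
    _ ≤ ∫⁻ ω in s, ENNReal.ofReal (g ω) ∂μ :=
        lintegral_mono_ae (ae_restrict_of_ae (hfg.mono fun _ h => ENNReal.ofReal_le_ofReal h))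

theorem ae_summable_of_condExp_le [IsFiniteMeasure μ] (hm : m ≤ m0) {ι : Type*} [Countable ι]
    {f g : ι → Ω → ℝ} (hf : ∀ i, Integrable (f i) μ) (hf0 : ∀ i ω, 0 ≤ f i ω)
    (hg : ∀ i, Measurable[m] (g i)) (hfg : ∀ i, μ[f i|m] ≤ᵐ[μ] g i)
    (hg_sum : ∀ᵐ ω ∂μ, Summable fun i => g i ω) : ∀ᵐ ω ∂μ, Summable fun i => f i ω := by
  have hF : ∀ i, AEMeasurable (fun ω => ENNReal.ofReal (f i ω)) μ := fun i =>
    (hf i).aemeasurable.ennreal_ofReal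
  have hfin : ∀ᵐ ω ∂μ, ∑' i, ENNReal.ofReal (f i ω) < ∞ := by
    refine ae_lt_top_of_setLIntegral_le hm (AEMeasurable.tsum hF)
      (by fun_prop) (fun s hs => ?_)
      (hg_sum.mono fun _ h => h.tsum_ofReal_lt_top)
    rw [lintegral_tsum fun i => (hF i).restrict,
      lintegral_tsum fun i => ((hg i).mono hm le_rfl).ennreal_ofReal.aemeasurable]
    exact ENNReal.tsum_le_tsum fun i => setLIntegral_ofReal_le_of_condExp_le hm (hf i)
      (ae_of_all _ (hf0 i)) (hfg i) hs
  filter_upwards [hfin] with ω h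
  exact (ENNReal.summable_toReal h.ne).congr fun i => ENNReal.toReal_ofReal (hf0 i ω)

theorem Summable.integrable_comp [IsFiniteMeasure μ] {S : Type*} [MeasurableSpace S]
    [Countable S] [MeasurableSingletonClass S] {α : S → ℝ} (hα_sum : Summable α)
    (hα0 : ∀ x, 0 ≤ α x) {Y : Ω → S} (hY : Measurable Y) : Integrable (fun ω => α (Y ω)) μ :=
  .of_bound ((measurable_of_countable α).comp hY).aestronglyMeasurable (∑' x, α x)
    (ae_of_all _ fun ω => by
      rw [Real.norm_of_nonneg (hα0 _)]
      exact hα_sum.le_tsum _ fun _ _ => hα0 _)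

end CondExp

theorem liggett_spitzer_state_space_general
    {Ω : Type*} {m0 : MeasurableSpace Ω} (μ : Measure Ω) [IsProbabilityMeasure μ]
    {ι : Type*} [Countable ι]
    (a : (ℤ × ℤ) → (ℤ × ℤ) → ℝ)
    (ha_nonneg : ∀ x y, 0 ≤ a x y)
    (ha_prob : ∀ x, ∑' y : ℤ × ℤ, a x y = 1)
    (α : (ℤ × ℤ) → ℝ) (hα_pos : ∀ x, 0 < α x) (hα_sum : Summable α)
    (Γ : ℝ) (hΓ : ∀ x, ∑' y : ℤ × ℤ, a x y * α y ≤ Γ * α x)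
    (ℱ : Filtration ℝ≥0 m0)
    (X : ι → ℝ≥0 → Ω → ℤ × ℤ)
    (hadapted : ∀ i t, Measurable[ℱ t] (X i t))
    (hmarkov : ∀ i, ∀ s t : ℝ≥0, s ≤ t →
      μ[(fun ω => α (X i t ω))|ℱ s] =ᵐ[μ]
        fun ω => ∑' y : ℤ × ℤ, transP a ((t : ℝ) - (s : ℝ)) (X i s ω) y * α y)
    (hinit : ∀ᵐ ω ∂μ, Summable fun i => α (X i 0 ω)) :
    ∀ t : ℝ≥0, ∀ᵐ ω ∂μ,
      (Summable fun i => α (X i t ω)) ∧ ∀ x : ℤ × ℤ, {i : ι | X i t ω = x}.Finite := by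
  intro t
  have ha : ∀ x, HasSum (a x) 1 := fun x => by
    have hs : Summable (a x) := by
      by_contra h
      simpa [tsum_eq_zero_of_not_summable h] using ha_prob x
    exact hs.hasSum_iff.2 (ha_prob x)
  have hα0 : ∀ x, 0 ≤ α x := fun x => (hα_pos x).le
  have hΓ0 : 0 ≤ Γ := nonneg_of_mul_nonneg_left
    ((tsum_nonneg fun y => mul_nonneg (ha_nonneg 0 y) (hα0 y)).trans (hΓ 0)) (hα_pos 0)
  set C := Real.exp ((Γ - 1) * t)
  have hdrift : ∀ i, μ[(fun ω => α (X i t ω))|ℱ 0] ≤ᵐ[μ] fun ω => C * α (X i 0 ω) := fun i =>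
    (hmarkov i 0 t zero_le).trans_le (ae_of_all _ fun ω => by
      simpa using tsum_transP_mul_le ha_nonneg ha hα0 hα_sum hΓ0 hΓ t.coe_nonneg (X i 0 ω))
  have hsum : ∀ᵐ ω ∂μ, Summable fun i => α (X i t ω) :=
    ae_summable_of_condExp_le (ℱ.le 0)
      (fun i => hα_sum.integrable_comp hα0 ((hadapted i t).mono (ℱ.le t) le_rfl))
      (fun i ω => hα0 _)
      (fun i => ((measurable_of_countable α).comp (hadapted i 0)).const_mul C) hdrift
      (hinit.mono fun _ h => h.mul_left C)
  filter_upwards [hsum] with ω h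
  exact ⟨h, fun x => h.finite_fiber (hα_pos x)⟩

/-- Under the Liggett–Spitzer conditions, if the initial configuration
`η₀ = ∑_i δ_{X^i_0}` lies in the Liggett–Spitzer space `ℰ_α` almost surely, then for every
`t ≥ 0` the configuration `η_t` lies in `ℰ_α` a.s.; in particular it is locally finite a.s. -/
theorem liggett_spitzer_state_space
    {Ω : Type*} {m0 : MeasurableSpace Ω} (μ : Measure Ω) [IsProbabilityMeasure μ]
    {ι : Type*} [Countable ι]
    (a : (ℤ × ℤ) → (ℤ × ℤ) → ℝ)
    (ha_nonneg : ∀ x y, 0 ≤ a x y)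
    (ha_prob : ∀ x, ∑' y : ℤ × ℤ, a x y = 1)
    (ha_shift : ∀ x y, a x y = a 0 (y - x))
    (ha_irred : ∀ x y, ∃ n : ℕ, 0 < aIter a n x y)
    (α : (ℤ × ℤ) → ℝ) (hα_pos : ∀ x, 0 < α x) (hα_sum : Summable α)
    (Γ : ℝ) (hΓ : ∀ x, ∑' y : ℤ × ℤ, a x y * α y ≤ Γ * α x)
    (ℱ : Filtration ℝ≥0 m0)
    (X : ι → ℝ≥0 → Ω → ℤ × ℤ)
    (hadapted : ∀ i t, Measurable[ℱ t] (X i t))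
    (hindep : iIndepFun
      (fun i ω => (fun t : ℝ≥0 => X i t ω)) μ)
    (hmarkov : ∀ i, ∀ s t : ℝ≥0, s ≤ t →
      μ[(fun ω => α (X i t ω))|ℱ s] =ᵐ[μ]
        fun ω => ∑' y : ℤ × ℤ, transP a ((t : ℝ) - (s : ℝ)) (X i s ω) y * α y)
    (hinit : ∀ᵐ ω ∂μ, Summable fun i => α (X i 0 ω)) :
    ∀ t : ℝ≥0, ∀ᵐ ω ∂μ,
      (Summable fun i => α (X i t ω)) ∧ ∀ x : ℤ × ℤ, {i : ι | X i t ω = x}.Finite :=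
  liggett_spitzer_state_space_general μ a ha_nonneg ha_prob α hα_pos hα_sum Γ hΓ ℱ X hadapted
    hmarkov hinit
end

section
/- Let $C$ be a partition with $\#C=n$ blocks, all located in a box of diameter at most $D$, and suppose each pair of blocks coalesces within time $s$ with probability at least $H=H^\gamma_s$. Then the expected number of blocks after time $s$ satisfies $\mathbf{E}[\#C_s]\leq n-(n-1)H$. -/
/-!
The partition is encoded by the retraction `c ω` sending each element to the minimal element
of its block. The number of blocks is then the number of fixed points of this map, so its
expectation is `∑ i, P(i is fixed)`. The minimal element `0` is always fixed, and any other
`i` cannot be fixed once it has merged with the block of `0`, an event of probability at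
least `H`; hence `P(i is fixed) ≤ 1 - H` for each of the `n - 1` elements `i ≠ 0`.
-/

open MeasureTheory Finset

lemma image_univ_eq_filter_fixed_of_idempotent {α : Type*} [Fintype α] [DecidableEq α]
    {f : α → α} (hf : ∀ i, f (f i) = f i) :
    univ.image f = univ.filter fun i => f i = i := by
  ext j
  simp only [mem_image, mem_filter, mem_univ, true_and]
  exact ⟨fun ⟨i, hi⟩ => hi ▸ hf i, fun h => ⟨j, h⟩⟩

lemma measureReal_le_one_sub_of_disjoint {Ω : Type*} [MeasurableSpace Ω] {μ : Measure Ω}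
    [IsProbabilityMeasure μ] {s t : Set Ω} (hst : Disjoint s t) (ht : MeasurableSet t) {H : ℝ}
    (hH : ENNReal.ofReal H ≤ μ t) : μ.real s ≤ 1 - H := by
  have hHt : H ≤ μ.real t := (ENNReal.ofReal_le_iff_le_toReal (measure_ne_top μ t)).1 hH
  calc μ.real s ≤ μ.real tᶜ := measureReal_mono hst.subset_compl_right
    _ = 1 - μ.real t := probReal_compl_eq_one_sub ht
    _ ≤ 1 - H := by linarith

section RandomRetraction

variable {Ω α : Type*} [MeasurableSpace Ω] {μ : Measure Ω} [MeasurableSpace α]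
  {c : Ω → α → α}

lemma integral_card_image_eq_sum_measureReal_fixed [IsFiniteMeasure μ] [Fintype α]
    [DecidableEq α] [MeasurableSingletonClass α] (hc_meas : Measurable c)
    (hc_idem : ∀ ω i, c ω (c ω i) = c ω i) :
    ∫ ω, ((univ.image (c ω)).card : ℝ) ∂μ = ∑ i, μ.real {ω | c ω i = i} := by
  have hmeas (i : α) : MeasurableSet {ω | c ω i = i} :=
    (measurable_pi_apply i).comp hc_meas (measurableSet_singleton i)
  have hcard (ω : Ω) :
      ((univ.image (c ω)).card : ℝ) = ∑ i, {ω | c ω i = i}.indicator 1 ω := by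
    rw [image_univ_eq_filter_fixed_of_idempotent (hc_idem ω), card_filter]
    push_cast
    simp [Set.indicator_apply]
  simp_rw [hcard]
  rw [integral_finsetSum _ fun i _ => (integrable_const 1).indicator (hmeas i)]
  simp_rw [integral_indicator_one (hmeas _)]

lemma measureReal_fixed_le_one_sub_of_merge_root [IsProbabilityMeasure μ] [MeasurableEq α]
    (hc_meas : Measurable c) {i j : α} (hj : ∀ ω, c ω j = j) (hij : i ≠ j) {H : ℝ}
    (hH : ENNReal.ofReal H ≤ μ {ω | c ω i = c ω j}) :
    μ.real {ω | c ω i = i} ≤ 1 - H := by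
  refine measureReal_le_one_sub_of_disjoint ?_
    (measurableSet_eq_fun ((measurable_pi_apply i).comp hc_meas)
      ((measurable_pi_apply j).comp hc_meas)) hH
  refine Set.disjoint_left.2 fun ω (hi : c ω i = i) (hmerge : c ω i = c ω j) => hij ?_
  rw [← hi, hmerge, hj]

end RandomRetraction

/-- One-box coalescence estimate: a random partition of `n` blocks is encoded by a random
retraction `c ω : Fin n → Fin n` mapping each element to the minimal element of its block
(`c` is idempotent and `c i ≤ i`), so that the number of blocks is the cardinality of the
image of `c ω`.  If each pair of blocks has merged by time `s` with probability at least
`H`, then the expected number of blocks satisfies `E[#C_s] ≤ n - (n-1) H`. -/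
theorem expected_block_number_bound
    {Ω : Type*} [MeasurableSpace Ω] (μ : Measure Ω) [IsProbabilityMeasure μ]
    (n : ℕ) (hn : 1 ≤ n)
    (c : Ω → Fin n → Fin n) (hc_meas : Measurable c)
    (hc_idem : ∀ ω i, c ω (c ω i) = c ω i)
    (hc_min : ∀ ω i, c ω i ≤ i)
    (H : ℝ)
    (hH : ∀ i j : Fin n, i ≠ j → ENNReal.ofReal H ≤ μ {ω | c ω i = c ω j}) :
    ∫ ω, ((Finset.univ.image (c ω)).card : ℝ) ∂μ ≤ (n : ℝ) - ((n : ℝ) - 1) * H := by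
  obtain ⟨m, rfl⟩ : ∃ m, n = m + 1 := ⟨n - 1, by omega⟩
  have hroot (ω : Ω) : c ω 0 = 0 := Fin.le_zero_iff.1 (hc_min ω 0)
  have hrest : ∑ i : Fin m, μ.real {ω | c ω i.succ = i.succ} ≤ ∑ _i : Fin m, (1 - H) :=
    sum_le_sum fun i _ => measureReal_fixed_le_one_sub_of_merge_root hc_meas hroot
      (Fin.succ_ne_zero i) (hH _ _ (Fin.succ_ne_zero i))
  have hzero : μ.real {ω | c ω 0 = 0} ≤ 1 := measureReal_le_one
  rw [integral_card_image_eq_sum_measureReal_fixed hc_meas hc_idem, Fin.sum_univ_succ]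
  simp only [sum_const, card_univ, Fintype.card_fin, nsmul_eq_mul] at hrest
  push_cast
  linarith
end
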